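/- arXiv:2210.14015 — 4 statements merged into one kernel-verified Lean document; each statement's English description precedes it below -/
import Mathlib

section
/- With N and D as in the single-point construction (N(z) = (z-z₁)I + (z₁/(1+z₁))A₁Γ₁^{-1}(I-A₁*)(1+z), D(z) = (z-z₁)I + (z₁/(1+z₁))Γ₁^{-1}(I-A₁*)(1+z)), for every ω ∈ (-π, π] one has N*(e^{jω})N(e^{jω}) = D*(e^{jω})D(e^{jω}); consequently G(e^{jω}) := N(e^{jω})D(e^{jω})^{-1} is unitary wherever D(e^{jω}) is invertible. -/
open scoped Matrix ComplexOrder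

theorem scalar_key (z z₁ : ℂ) (hz : z ≠ 0) (hz1 : z₁ ≠ 0) (h1 : (1:ℂ)+z₁ ≠ 0)
    (hcz : (starRingEnd ℂ) z = z⁻¹) (hcz1 : (starRingEnd ℂ) z₁ = z₁⁻¹) :
    (starRingEnd ℂ) (z - z₁) * (z₁/(1+z₁)*(1+z)) =
      -((starRingEnd ℂ) (z₁/(1+z₁)*(1+z)) * (z - z₁)) := by
  have h1' : (1:ℂ) + z₁⁻¹ = (1+z₁)/z₁ := by field_simp; ring
  simp only [map_sub, map_mul, map_div₀, map_add, map_one, hcz, hcz1, h1',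
    div_div_eq_mul_div]
  rw [inv_mul_cancel₀ hz1]
  field_simp
  ring

theorem mat_key {n : ℕ} (A T : Matrix (Fin n) (Fin n) ℂ) (hA : Aᴴ * A = 1) (hT : Tᴴ = T)
    (a c : ℂ) (hc : (star a) * c = -((star c) * a)) :
    (a • (1:Matrix (Fin n) (Fin n) ℂ) + c • (A * T * (1 - Aᴴ)))ᴴ
        * (a • (1:Matrix (Fin n) (Fin n) ℂ) + c • (A * T * (1 - Aᴴ)))
    = (a • (1:Matrix (Fin n) (Fin n) ℂ) + c • (T * (1 - Aᴴ)))ᴴ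
        * (a • (1:Matrix (Fin n) (Fin n) ℂ) + c • (T * (1 - Aᴴ))) := by
  have hMH : (A * T * (1 - Aᴴ))ᴴ = (1 - A) * T * Aᴴ := by
    simp [Matrix.conjTranspose_mul, hT, Matrix.mul_assoc]
  have hBH : (T * (1 - Aᴴ))ᴴ = (1 - A) * T := by
    simp [Matrix.conjTranspose_mul, hT]
  have hAA : ∀ X : Matrix (Fin n) (Fin n) ℂ, Aᴴ * (A * X) = X := by
    intro X; rw [← Matrix.mul_assoc, hA, Matrix.one_mul]
  have h1 : ((1 - A) * T * Aᴴ) * (A * T * (1 - Aᴴ)) = ((1 - A) * T) * (T * (1 - Aᴴ)) := by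
    simp [Matrix.mul_assoc, hAA]
  have h2 : (A * T * (1 - Aᴴ))ᴴ = (A * T * (1 - Aᴴ)) + (((T * (1 - Aᴴ))ᴴ) - (T * (1 - Aᴴ))) := by
    rw [hMH, hBH]; noncomm_ring
  simp only [Matrix.conjTranspose_add, Matrix.conjTranspose_smul, Matrix.conjTranspose_one,
    Matrix.add_mul, Matrix.mul_add, Matrix.smul_mul, Matrix.mul_smul, smul_smul,
    Matrix.one_mul, Matrix.mul_one]
  rw [show (A * T * (1 - Aᴴ))ᴴ * (A * T * (1 - Aᴴ)) = (T * (1 - Aᴴ))ᴴ * (T * (1 - Aᴴ)) by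
    rw [hMH, hBH, h1]]
  rw [h2]
  match_scalars
  all_goals simp only [Complex.star_def] at hc ⊢
  all_goals first
    | linear_combination hc
    | linear_combination -hc
    | ring

/-- for the single-point construction, `N*(e^{jω})N(e^{jω}) = D*(e^{jω})D(e^{jω})`
for every `ω ∈ (-π, π]`; consequently `G(e^{jω}) = N(e^{jω})D(e^{jω})⁻¹` is unitary wherever
`D(e^{jω})` is invertible. -/
theorem stmt4 (m : ℕ) (ω₁ : ℝ) (hω₁ : ω₁ ∈ Set.Ioc (-Real.pi) Real.pi)
    (z₁ : ℂ) (hz₁ : z₁ = Complex.exp (Complex.I * (ω₁ : ℂ))) (hz₁' : z₁ ≠ -1)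
    (A₁ Γ₁ : Matrix (Fin m) (Fin m) ℂ) (hA : A₁ᴴ * A₁ = 1) (hΓ : Γ₁.PosDef)
    (N D : ℂ → Matrix (Fin m) (Fin m) ℂ)
    (hN : ∀ z, N z = (z - z₁) • (1 : Matrix (Fin m) (Fin m) ℂ)
      + (z₁ / (1 + z₁) * (1 + z)) • (A₁ * Γ₁⁻¹ * (1 - A₁ᴴ)))
    (hD : ∀ z, D z = (z - z₁) • (1 : Matrix (Fin m) (Fin m) ℂ)
      + (z₁ / (1 + z₁) * (1 + z)) • (Γ₁⁻¹ * (1 - A₁ᴴ))) :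
    ∀ ω ∈ Set.Ioc (-Real.pi) Real.pi,
      (N (Complex.exp (Complex.I * (ω : ℂ))))ᴴ * N (Complex.exp (Complex.I * (ω : ℂ)))
        = (D (Complex.exp (Complex.I * (ω : ℂ))))ᴴ * D (Complex.exp (Complex.I * (ω : ℂ))) ∧
      (IsUnit (D (Complex.exp (Complex.I * (ω : ℂ)))) →
        (N (Complex.exp (Complex.I * (ω : ℂ))) * (D (Complex.exp (Complex.I * (ω : ℂ))))⁻¹)ᴴ
          * (N (Complex.exp (Complex.I * (ω : ℂ))) * (D (Complex.exp (Complex.I * (ω : ℂ))))⁻¹)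
          = 1) := by
  have key : ∀ w : ℝ, (starRingEnd ℂ) (Complex.exp (Complex.I * (w : ℂ)))
      = (Complex.exp (Complex.I * (w : ℂ)))⁻¹ := by
    intro w
    rw [← Complex.exp_conj, ← Complex.exp_neg]
    congr 1
    simp [Complex.conj_ofReal]
  have hT : (Γ₁⁻¹)ᴴ = Γ₁⁻¹ := by
    rw [Matrix.conjTranspose_nonsing_inv, hΓ.isHermitian.eq]
  have hz10 : z₁ ≠ 0 := by rw [hz₁]; exact Complex.exp_ne_zero _
  have h1z1 : (1:ℂ) + z₁ ≠ 0 := by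
    intro h; exact hz₁' (by linear_combination h)
  intro ω hω
  set z : ℂ := Complex.exp (Complex.I * (ω : ℂ)) with hzdef
  have hz0 : z ≠ 0 := Complex.exp_ne_zero _
  have hcz : (starRingEnd ℂ) z = z⁻¹ := key ω
  have hcz1 : (starRingEnd ℂ) z₁ = z₁⁻¹ := by rw [hz₁]; exact key ω₁
  have hc := scalar_key z z₁ hz0 hz10 h1z1 hcz hcz1
  have part1 : (N z)ᴴ * N z = (D z)ᴴ * D z := by
    rw [hN z, hD z]
    exact mat_key A₁ Γ₁⁻¹ hA hT (z - z₁) (z₁/(1+z₁)*(1+z)) hc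
  refine ⟨part1, fun hU => ?_⟩
  have hdet : IsUnit (D z).det := (Matrix.isUnit_iff_isUnit_det _).mp hU
  have hDDi : D z * (D z)⁻¹ = 1 := Matrix.mul_nonsing_inv _ hdet
  calc ((N z) * (D z)⁻¹)ᴴ * ((N z) * (D z)⁻¹)
      = (D z)⁻¹ᴴ * ((N z)ᴴ * N z) * (D z)⁻¹ := by
        rw [Matrix.conjTranspose_mul]
        simp only [Matrix.mul_assoc]
    _ = (D z)⁻¹ᴴ * ((D z)ᴴ * D z) * (D z)⁻¹ := by rw [part1]
    _ = (D z * (D z)⁻¹)ᴴ * (D z * (D z)⁻¹) := by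
        rw [Matrix.conjTranspose_mul]
        simp only [Matrix.mul_assoc]
    _ = 1 := by rw [hDDi]; simp
end

section
/- For the single-point construction G(z) = N(z)D(z)^{-1} with N(z) = (z-z₁)I + (z₁/(1+z₁))A₁Γ₁^{-1}(I-A₁*)(1+z) and D(z) = (z-z₁)I + (z₁/(1+z₁))Γ₁^{-1}(I-A₁*)(1+z), the group delay matrix at ω₁ satisfies j·G*(e^{jω₁})·(dG(e^{jω₁})/dω) = Γ₁. -/
/-!
Writing `N z = A₁ D z + (z - z₁)(I - A₁)` gives `G = A₁ + (z - z₁)(I - A₁) D(z)⁻¹` near `ω₁`.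
The scalar factor `z - z₁` vanishes at `ω₁`, so `G(ω₁) = A₁` and, by continuity of `D⁻¹`,
`G'(ω₁) = j z₁ (I - A₁) D(z₁)⁻¹` with `D(z₁) = Γ₁⁻¹ z₁ (I - A₁*)`. Unitarity turns
`A₁* (I - A₁)` into `-(I - A₁*)`, and the factors `I - A₁*` cancel against `D(z₁)⁻¹`.
-/

open scoped Matrix ComplexOrder

open Filter Topology

theorem HasDerivAt.smul_of_continuousAt_of_eq_zero {𝕜 𝕜' F : Type*}
    [NontriviallyNormedField 𝕜] [NontriviallyNormedField 𝕜'] [NormedAlgebra 𝕜 𝕜']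
    [NormedAddCommGroup F] [NormedSpace 𝕜 F] [NormedSpace 𝕜' F] [IsScalarTower 𝕜 𝕜' F]
    {φ : 𝕜 → 𝕜'} {φ' : 𝕜'} {h : 𝕜 → F} {x : 𝕜}
    (hφ : HasDerivAt φ φ' x) (hφx : φ x = 0) (hh : ContinuousAt h x) :
    HasDerivAt (fun t => φ t • h t) (φ' • h x) x := by
  rw [hasDerivAt_iff_tendsto_slope] at hφ ⊢
  have hslope : slope (fun t => φ t • h t) x =ᶠ[𝓝[≠] x] fun t => slope φ x t • h t :=
    Eventually.of_forall fun t => by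
      simp only [slope_def_module, hφx, zero_smul, sub_zero, smul_assoc]
  exact (hφ.smul (hh.mono_left nhdsWithin_le_nhds)).congr' hslope.symm

theorem Matrix.eq_smul_of_hasDerivAt_apply_of_eventuallyEq {𝕜 𝕜' m n : Type*}
    [NontriviallyNormedField 𝕜] [NontriviallyNormedField 𝕜'] [NormedAlgebra 𝕜 𝕜']
    {G K : 𝕜 → Matrix m n 𝕜'} {A G' : Matrix m n 𝕜'} {φ : 𝕜 → 𝕜'} {φ' : 𝕜'} {x : 𝕜}
    (hG : ∀ᶠ t in 𝓝 x, G t = A + φ t • K t) (hφ : HasDerivAt φ φ' x) (hφx : φ x = 0)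
    (hK : ContinuousAt K x) (hG' : ∀ a b, HasDerivAt (fun t => G t a b) (G' a b) x) :
    G' = φ' • K x := by
  ext a b
  have hKab : ContinuousAt (fun t => K t a b) x :=
    (continuous_id.matrix_elem a b).continuousAt.comp hK
  refine (hG' a b).unique
    (((hφ.smul_of_continuousAt_of_eq_zero hφx hKab).const_add (A a b)).congr_of_eventuallyEq ?_)
  filter_upwards [hG] with t ht
  rw [ht]
  rfl

theorem ContinuousAt.matrix_nonsing_inv {X n 𝕜 : Type*} [TopologicalSpace X] [Fintype n]
    [DecidableEq n] [Field 𝕜] [TopologicalSpace 𝕜] [IsTopologicalDivisionRing 𝕜]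
    {M : X → Matrix n n 𝕜} {x : X} (hM : ContinuousAt M x) (hdet : IsUnit (M x).det) :
    ContinuousAt (fun y => (M y)⁻¹) x := by
  refine ContinuousAt.comp (g := Inv.inv) (continuousAt_matrix_inv _ ?_) hM
  rw [Ring.inverse_eq_inv']
  exact continuousAt_inv₀ hdet.ne_zero

theorem Matrix.nonsing_inv_eq_add_of_eq_mul_add {n α : Type*} [Fintype n] [DecidableEq n]
    [CommRing α] {N D A E : Matrix n n α} (hN : N = A * D + E) (hD : IsUnit D.det) :
    N * D⁻¹ = A + E * D⁻¹ := by
  rw [hN, Matrix.add_mul, Matrix.mul_assoc, Matrix.mul_nonsing_inv _ hD, Matrix.mul_one]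

theorem Matrix.mul_nonsing_inv_nonsing_inv_mul {n α : Type*} [Fintype n] [DecidableEq n]
    [CommRing α] {Γ B : Matrix n n α} (h : IsUnit (Γ⁻¹ * B).det) : B * (Γ⁻¹ * B)⁻¹ = Γ := by
  rw [Matrix.det_mul] at h
  have hΓ : IsUnit Γ.det := Matrix.isUnit_nonsing_inv_det_iff.mp (isUnit_of_mul_isUnit_left h)
  rw [Matrix.mul_inv_rev, Matrix.nonsing_inv_nonsing_inv _ hΓ, ← Matrix.mul_assoc,
    Matrix.mul_nonsing_inv _ (isUnit_of_mul_isUnit_right h), Matrix.one_mul]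

theorem hasDerivAt_cexp_I_mul_ofReal (ω : ℝ) :
    HasDerivAt (fun t : ℝ => Complex.exp (Complex.I * t))
      (Complex.I * Complex.exp (Complex.I * ω)) ω := by
  simpa [mul_comm] using ((hasDerivAt_id (ω : ℂ)).const_mul Complex.I).cexp.comp_ofReal

theorem Matrix.unitary_conjTranspose_mul_one_sub {n α : Type*} [Fintype n] [DecidableEq n]
    [Ring α] [StarRing α] {A : Matrix n n α} (hA : Aᴴ * A = 1) : Aᴴ * (1 - A) = -(1 - Aᴴ) := by
  rw [Matrix.mul_sub, Matrix.mul_one, hA, neg_sub]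

theorem numerator_eq_mul_denominator_add {n : Type*} [Fintype n] [DecidableEq n]
    {N D : ℂ → Matrix n n ℂ} {A P : Matrix n n ℂ} {c : ℂ → ℂ} {z₁ : ℂ}
    (hN : ∀ z, N z = (z - z₁) • (1 : Matrix n n ℂ) + c z • (A * P))
    (hD : ∀ z, D z = (z - z₁) • (1 : Matrix n n ℂ) + c z • P) (z : ℂ) :
    N z = A * D z + (z - z₁) • (1 - A) := by
  rw [hN, hD, Matrix.mul_add, Matrix.mul_smul, Matrix.mul_smul, Matrix.mul_one, smul_sub]
  abel

theorem stmt6_general (m : ℕ) (ω₁ : ℝ)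
    (z₁ : ℂ) (hz₁ : z₁ = Complex.exp (Complex.I * (ω₁ : ℂ))) (hz₁' : z₁ ≠ -1)
    (A₁ Γ₁ : Matrix (Fin m) (Fin m) ℂ) (hA : A₁ᴴ * A₁ = 1)
    (N D : ℂ → Matrix (Fin m) (Fin m) ℂ)
    (hN : ∀ z, N z = (z - z₁) • (1 : Matrix (Fin m) (Fin m) ℂ)
      + (z₁ / (1 + z₁) * (1 + z)) • (A₁ * Γ₁⁻¹ * (1 - A₁ᴴ)))
    (hD : ∀ z, D z = (z - z₁) • (1 : Matrix (Fin m) (Fin m) ℂ)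
      + (z₁ / (1 + z₁) * (1 + z)) • (Γ₁⁻¹ * (1 - A₁ᴴ)))
    (G : ℝ → Matrix (Fin m) (Fin m) ℂ)
    (hG : ∀ ω : ℝ, G ω = N (Complex.exp (Complex.I * (ω : ℂ)))
      * (D (Complex.exp (Complex.I * (ω : ℂ))))⁻¹)
    (hDinv : ∀ᶠ ω in nhds ω₁, IsUnit (D (Complex.exp (Complex.I * (ω : ℂ)))))
    (G' : Matrix (Fin m) (Fin m) ℂ)
    (hG' : ∀ a b : Fin m, HasDerivAt (fun ω : ℝ => G ω a b) (G' a b) ω₁) :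
    Complex.I • ((G ω₁)ᴴ * G') = Γ₁ := by
  set g : ℝ → ℂ := fun ω => Complex.exp (Complex.I * ω)
  have hgω₁ : g ω₁ = z₁ := hz₁.symm
  have hNAD := numerator_eq_mul_denominator_add (fun z => (hN z).trans (by rw [Matrix.mul_assoc])) hD
  have hDz₁ : D z₁ = Γ₁⁻¹ * (z₁ • (1 - A₁ᴴ)) := by
    have h1z : 1 + z₁ ≠ 0 := fun h => hz₁' (by linear_combination h)
    rw [hD, sub_self, zero_smul, zero_add, div_mul_cancel₀ _ h1z, Matrix.mul_smul]
  have hDz₁_det : IsUnit (D z₁).det :=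
    (Matrix.isUnit_iff_isUnit_det _).mp (hgω₁ ▸ hDinv.self_of_nhds)
  have hG_eq : ∀ᶠ ω in 𝓝 ω₁, G ω = A₁ + (g ω - z₁) • ((1 - A₁) * (D (g ω))⁻¹) := by
    -- `hDinv` lives on a complex neighbourhood of `ω₁`: the ascription `(ω : ℂ)` makes `ω` complex.
    filter_upwards [(Complex.continuous_ofReal.tendsto ω₁).eventually hDinv] with ω hω
    rw [hG, Matrix.nonsing_inv_eq_add_of_eq_mul_add (hNAD _)
      ((Matrix.isUnit_iff_isUnit_det _).mp hω), Matrix.smul_mul]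
  have hK : ContinuousAt (fun ω => (1 - A₁) * (D (g ω))⁻¹) ω₁ := by
    have hDg : Continuous fun ω => D (g ω) := by
      simp only [funext hD, g]
      fun_prop
    exact (continuous_const.matrix_mul continuous_id).continuousAt.comp
      (hDg.continuousAt.matrix_nonsing_inv (hgω₁ ▸ hDz₁_det))
  have hG'_eq := Matrix.eq_smul_of_hasDerivAt_apply_of_eventuallyEq hG_eq
    ((hasDerivAt_cexp_I_mul_ofReal ω₁).sub_const z₁) (sub_eq_zero.mpr hgω₁) hK hG'
  have hGω₁ : G ω₁ = A₁ := by
    simpa [hgω₁] using hG_eq.self_of_nhds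
  calc Complex.I • ((G ω₁)ᴴ * G')
      = (z₁ • (1 - A₁ᴴ)) * (D z₁)⁻¹ := by
        rw [hGω₁, hG'_eq, ← hz₁, hgω₁, Matrix.mul_smul, ← Matrix.mul_assoc,
          Matrix.unitary_conjTranspose_mul_one_sub hA, Matrix.neg_mul, Matrix.smul_mul,
          smul_smul, ← mul_assoc, Complex.I_mul_I, smul_neg, neg_one_mul, neg_smul, neg_neg]
    _ = Γ₁ := hDz₁ ▸ Matrix.mul_nonsing_inv_nonsing_inv_mul (hDz₁ ▸ hDz₁_det)

/-- for the single-point construction `G(z) = N(z)D(z)⁻¹`, the group delay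
matrix at `ω₁` satisfies `j·G*(e^{jω₁})·(dG(e^{jω₁})/dω) = Γ₁`. -/
theorem stmt6 (m : ℕ) (ω₁ : ℝ) (hω₁ : ω₁ ∈ Set.Ioc (-Real.pi) Real.pi)
    (z₁ : ℂ) (hz₁ : z₁ = Complex.exp (Complex.I * (ω₁ : ℂ))) (hz₁' : z₁ ≠ -1)
    (A₁ Γ₁ : Matrix (Fin m) (Fin m) ℂ) (hA : A₁ᴴ * A₁ = 1) (hΓ : Γ₁.PosDef)
    (N D : ℂ → Matrix (Fin m) (Fin m) ℂ)
    (hN : ∀ z, N z = (z - z₁) • (1 : Matrix (Fin m) (Fin m) ℂ)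
      + (z₁ / (1 + z₁) * (1 + z)) • (A₁ * Γ₁⁻¹ * (1 - A₁ᴴ)))
    (hD : ∀ z, D z = (z - z₁) • (1 : Matrix (Fin m) (Fin m) ℂ)
      + (z₁ / (1 + z₁) * (1 + z)) • (Γ₁⁻¹ * (1 - A₁ᴴ)))
    (G : ℝ → Matrix (Fin m) (Fin m) ℂ)
    (hG : ∀ ω : ℝ, G ω = N (Complex.exp (Complex.I * (ω : ℂ)))
      * (D (Complex.exp (Complex.I * (ω : ℂ))))⁻¹)
    (hDinv : ∀ᶠ ω in nhds ω₁, IsUnit (D (Complex.exp (Complex.I * (ω : ℂ)))))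
    (G' : Matrix (Fin m) (Fin m) ℂ)
    (hG' : ∀ a b : Fin m, HasDerivAt (fun ω : ℝ => G ω a b) (G' a b) ω₁) :
    Complex.I • ((G ω₁)ᴴ * G') = Γ₁ :=
  stmt6_general m ω₁ z₁ hz₁ hz₁' A₁ Γ₁ hA N D hN hD G hG hDinv G' hG'
end

section
/- Let H(z) be the 2m×2m matrix with blocks H₁₁ = 2(z-z₁)I - (z+1)(z₁+1)Γ₁^{-1}, H₁₂ = (z+1)(z₁+1)Γ₁^{-1}A₁*, H₂₁ = -(z+1)(z₁+1)A₁Γ₁^{-1}, H₂₂ = 2(z-z₁)I + (z+1)(z₁+1)A₁Γ₁^{-1}A₁*. Then for z on the unit circle (so z̄ = 1/z), H(z)·J·H(z)* = (-4(z₁-z)²/(z₁z))·J, where J = diag(I_m, -I_m). -/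
open scoped Matrix ComplexOrder

/-- The block matrix `H(z)` of the inductive step. -/
noncomputable def Hmat (m : ℕ) (z₁ : ℂ) (A₁ Γ₁ : Matrix (Fin m) (Fin m) ℂ) (z : ℂ) :
    Matrix (Fin m ⊕ Fin m) (Fin m ⊕ Fin m) ℂ :=
  Matrix.fromBlocks
    ((2 * (z - z₁)) • (1 : Matrix (Fin m) (Fin m) ℂ) - ((z + 1) * (z₁ + 1)) • Γ₁⁻¹)
    (((z + 1) * (z₁ + 1)) • (Γ₁⁻¹ * A₁ᴴ))
    (-(((z + 1) * (z₁ + 1)) • (A₁ * Γ₁⁻¹)))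
    ((2 * (z - z₁)) • (1 : Matrix (Fin m) (Fin m) ℂ) + ((z + 1) * (z₁ + 1)) • (A₁ * Γ₁⁻¹ * A₁ᴴ))

set_option maxHeartbeats 2000000 in
/-- for `z, z₁` on the unit circle,
`H(z)·J·H(z)* = (-4(z₁-z)²/(z₁z))·J`, where `J = diag(I, -I)`. -/
theorem stmt11 (m : ℕ) (ω ω₁ : ℝ) (z z₁ : ℂ)
    (hz : z = Complex.exp (Complex.I * (ω : ℂ)))
    (hz₁ : z₁ = Complex.exp (Complex.I * (ω₁ : ℂ)))
    (A₁ Γ₁ : Matrix (Fin m) (Fin m) ℂ) (hA : A₁ᴴ * A₁ = 1) (hΓ : Γ₁.PosDef)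
    (J : Matrix (Fin m ⊕ Fin m) (Fin m ⊕ Fin m) ℂ) (hJ : J = Matrix.fromBlocks 1 0 0 (-1)) :
    Hmat m z₁ A₁ Γ₁ z * J * (Hmat m z₁ A₁ Γ₁ z)ᴴ
      = ((-4) * (z₁ - z) ^ 2 / (z₁ * z)) • J := by
  have hz0 : z ≠ 0 := by rw [hz]; exact Complex.exp_ne_zero _
  have hz₁0 : z₁ ≠ 0 := by rw [hz₁]; exact Complex.exp_ne_zero _
  have hsz : star z = z⁻¹ := by
    rw [hz, Complex.star_def, ← Complex.exp_conj, ← Complex.exp_neg]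
    congr 1
    simp
  have hsz₁ : star z₁ = z₁⁻¹ := by
    rw [hz₁, Complex.star_def, ← Complex.exp_conj, ← Complex.exp_neg]
    congr 1
    simp
  have hB : Γ₁⁻¹ᴴ = Γ₁⁻¹ := by
    rw [Matrix.conjTranspose_nonsing_inv, hΓ.1.eq]
  have hA' : A₁ * A₁ᴴ = 1 := mul_eq_one_comm.mp hA
  have hAA : ∀ X : Matrix (Fin m) (Fin m) ℂ, A₁ᴴ * (A₁ * X) = X := fun X => by
    rw [← Matrix.mul_assoc, hA, Matrix.one_mul]
  have hAA' : ∀ X : Matrix (Fin m) (Fin m) ℂ, A₁ * (A₁ᴴ * X) = X := fun X => by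
    rw [← Matrix.mul_assoc, hA', Matrix.one_mul]
  subst hJ
  rw [Hmat, Matrix.fromBlocks_conjTranspose, Matrix.fromBlocks_multiply,
    Matrix.fromBlocks_multiply, Matrix.fromBlocks_smul]
  have hc1 : (2 * (z - z₁)) * star (2 * (z - z₁)) = (-4) * (z₁ - z) ^ 2 / (z₁ * z) := by
    simp only [star_mul', star_sub, hsz, hsz₁, star_ofNat]
    field_simp
    ring
  have hc2 : (2 * (z - z₁)) * star ((z + 1) * (z₁ + 1))
      + ((z + 1) * (z₁ + 1)) * star (2 * (z - z₁)) = 0 := by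
    simp only [star_mul', star_sub, star_add, hsz, hsz₁, star_ofNat, star_one]
    field_simp
    ring
  refine Matrix.fromBlocks_inj.mpr ⟨?_, ?_, ?_, ?_⟩ <;>
  · simp only [Matrix.conjTranspose_sub, Matrix.conjTranspose_add, Matrix.conjTranspose_smul,
      Matrix.conjTranspose_one, Matrix.conjTranspose_mul, Matrix.conjTranspose_neg,
      Matrix.conjTranspose_conjTranspose, hB,
      Matrix.mul_sub, Matrix.sub_mul, Matrix.mul_add, Matrix.add_mul,
      Matrix.smul_mul, Matrix.mul_smul, Matrix.mul_one, Matrix.one_mul,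
      Matrix.neg_mul, Matrix.mul_neg, smul_smul, Matrix.mul_zero, Matrix.zero_mul,
      smul_neg, neg_neg, Matrix.mul_assoc, hAA, hAA', smul_zero]
    match_scalars <;>
    · simp only [star_mul', star_sub, star_add, hsz, hsz₁, star_ofNat, star_one]
      try field_simp
      try ring
end

section
/- Suppose G(e^{jω}) is unitary for all ω, differentiable at ω₁, and G is holomorphic in a neighborhood of e^{jω₁}. Then lim_{ε→0⁺} v*(I - G(e^{ε+jω₁})*G(e^{ε+jω₁}))v / (1 - e^{-2ε}) = v*F₁v, where F₁ = j·G*(e^{jω₁})(dG/dω)(e^{jω₁}). -/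
/-!
Write `A ε = G (e^{ε + jω₁})`. Since `G` is holomorphic at `e^{jω₁}`, the chain rule through its
complex derivative turns the angular derivative `G'` into the radial derivative `-j G'`
(Cauchy–Riemann). Differentiating `G*G = I` along the circle gives `G'* G₀ + G₀* G' = 0`, so the
radial derivative of `I - A* A` at `0` is `2 F₁`. Numerator and denominator `1 - e^{-2ε}` both
vanish at `ε = 0`, so the limit is the ratio `2 v* F₁ v / 2` of their derivatives.
-/

open scoped Matrix Topology
open Filter Complex

theorem tendsto_div_nhdsNE_of_hasDerivAt {𝕜 𝕜' : Type*} [NontriviallyNormedField 𝕜]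
    [NormedField 𝕜'] [NormedAlgebra 𝕜 𝕜'] {f g : 𝕜 → 𝕜'} {a b : 𝕜'} {x : 𝕜}
    (hf : HasDerivAt f a x) (hg : HasDerivAt g b x) (hfx : f x = 0) (hgx : g x = 0)
    (hb : b ≠ 0) :
    Tendsto (fun y => f y / g y) (𝓝[≠] x) (𝓝 (a / b)) := by
  refine ((hasDerivAt_iff_tendsto_slope.mp hf).div (hasDerivAt_iff_tendsto_slope.mp hg)
    hb).congr' ?_
  filter_upwards [self_mem_nhdsWithin] with y hy
  have hc : algebraMap 𝕜 𝕜' (y - x)⁻¹ ≠ 0 :=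
    (map_ne_zero _).mpr (inv_ne_zero (sub_ne_zero.mpr hy))
  simp only [Pi.div_apply, slope_def_module, hfx, hgx, sub_zero, Algebra.smul_def]
  exact mul_div_mul_left _ _ hc

theorem hasDerivAt_cexp_radial_of_angular {E : Type*} [NormedAddCommGroup E] [NormedSpace ℂ E]
    {f : ℂ → E} {ω : ℝ} {d : E} (hf : DifferentiableAt ℂ f (cexp (I * ω)))
    (hd : HasDerivAt (fun θ : ℝ => f (cexp (I * θ))) d ω) :
    HasDerivAt (fun ε : ℝ => f (cexp (ε + I * ω))) (-I • d) 0 := by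
  have hangular : HasDerivAt (fun θ : ℝ => cexp (I * θ)) (I * cexp (I * ω)) ω := by
    simpa [mul_comm] using (((hasDerivAt_id (ω : ℂ)).const_mul I).cexp).comp_ofReal
  have hradial : HasDerivAt (fun ε : ℝ => cexp (ε + I * ω)) (cexp (I * ω)) 0 := by
    simpa using (((hasDerivAt_id ((0 : ℝ) : ℂ)).add_const (I * ω)).cexp).comp_ofReal
  have hd' := hd.unique (hf.hasDerivAt.scomp ω hangular)
  have hz : cexp (((0 : ℝ) : ℂ) + I * ω) = cexp (I * ω) := by simp
  convert (hz ▸ hf.hasDerivAt).scomp (0 : ℝ) hradial using 1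
  · rfl
  rw [hd', smul_smul, ← mul_assoc]; simp

namespace Matrix

variable {n : Type*} [Fintype n] {K : Type*} [RCLike K]

theorem hasDerivAt_conjTranspose_mul_apply {A B : ℝ → Matrix n n K} {A' B' : Matrix n n K}
    {t : ℝ} (hA : ∀ a b, HasDerivAt (fun s => A s a b) (A' a b) t)
    (hB : ∀ a b, HasDerivAt (fun s => B s a b) (B' a b) t) (i j : n) :
    HasDerivAt (fun s => ((A s)ᴴ * B s) i j) ((A'ᴴ * B t + (A t)ᴴ * B') i j) t := by
  simp only [add_apply, mul_apply, conjTranspose_apply, ← Finset.sum_add_distrib]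
  exact HasDerivAt.fun_sum fun k _ => (hA k i).star.mul (hB k j)

theorem conjTranspose_mul_add_eq_zero_of_hasDerivAt [DecidableEq n] {U : ℝ → Matrix n n K}
    {U' : Matrix n n K} {t : ℝ} (hU : ∀ s, (U s)ᴴ * U s = 1)
    (hd : ∀ a b, HasDerivAt (fun s => U s a b) (U' a b) t) :
    U'ᴴ * U t + (U t)ᴴ * U' = 0 := by
  ext i j
  refine (hasDerivAt_conjTranspose_mul_apply hd hd i j).unique ?_
  simpa only [hU, zero_apply] using hasDerivAt_const t ((1 : Matrix n n K) i j)

theorem hasDerivAt_dotProduct_mulVec {M : ℝ → Matrix n n K} {M' : Matrix n n K} {t : ℝ}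
    (hM : ∀ a b, HasDerivAt (fun s => M s a b) (M' a b) t) (x y : n → K) :
    HasDerivAt (fun s => x ⬝ᵥ (M s *ᵥ y)) (x ⬝ᵥ (M' *ᵥ y)) t := by
  simp only [dotProduct, mulVec, Finset.mul_sum]
  exact HasDerivAt.fun_sum fun a _ => HasDerivAt.fun_sum fun b _ =>
    ((hM a b).mul_const (y b)).const_mul (x a)

end Matrix

/-- if `G(e^{jω})` is unitary for all `ω`, differentiable at `ω₁`, and `G`
is holomorphic near `e^{jω₁}`, then
`lim_{ε→0⁺} v*(I - G(e^{ε+jω₁})* G(e^{ε+jω₁}))v / (1 - e^{-2ε}) = v* F₁ v`,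
where `F₁ = j G*(e^{jω₁}) (dG/dω)(e^{jω₁})`. -/
theorem stmt18 (m : ℕ) (G : ℂ → Matrix (Fin m) (Fin m) ℂ) (ω₁ : ℝ) (v : Fin m → ℂ)
    (hunit : ∀ θ : ℝ, (G (Complex.exp (Complex.I * (θ : ℂ))))ᴴ
      * G (Complex.exp (Complex.I * (θ : ℂ))) = 1)
    (hanalytic : ∀ a b : Fin m,
      AnalyticAt ℂ (fun z => G z a b) (Complex.exp (Complex.I * (ω₁ : ℂ))))
    (G' : Matrix (Fin m) (Fin m) ℂ)
    (hderiv : ∀ a b : Fin m,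
      HasDerivAt (fun θ : ℝ => G (Complex.exp (Complex.I * (θ : ℂ))) a b) (G' a b) ω₁)
    (F₁ : Matrix (Fin m) (Fin m) ℂ)
    (hF₁ : F₁ = Complex.I • ((G (Complex.exp (Complex.I * (ω₁ : ℂ))))ᴴ * G')) :
    Filter.Tendsto
      (fun ε : ℝ =>
        (star v ⬝ᵥ (((1 : Matrix (Fin m) (Fin m) ℂ)
            - (G (Complex.exp ((ε : ℂ) + Complex.I * (ω₁ : ℂ))))ᴴ
              * G (Complex.exp ((ε : ℂ) + Complex.I * (ω₁ : ℂ)))) *ᵥ v))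
          / (1 - Complex.exp ((-2 * ε : ℝ) : ℂ)))
      (𝓝[>] 0) (𝓝 (star v ⬝ᵥ (F₁ *ᵥ v))) := by
  set G₀ := G (cexp (I * ω₁))
  set A : ℝ → Matrix (Fin m) (Fin m) ℂ := fun ε => G (cexp (ε + I * ω₁))
  have hA₀ : A 0 = G₀ := by simp [A, G₀]
  have hA : ∀ a b, HasDerivAt (fun ε => A ε a b) ((-I • G') a b) 0 := fun a b =>
    hasDerivAt_cexp_radial_of_angular (hanalytic a b).differentiableAt (hderiv a b)
  have hskew : G'ᴴ * G₀ + G₀ᴴ * G' = 0 :=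
    Matrix.conjTranspose_mul_add_eq_zero_of_hasDerivAt hunit hderiv
  have hmat : (2 : ℂ) • F₁ = -((-I • G')ᴴ * A 0 + (A 0)ᴴ * (-I • G')) := by
    rw [hA₀, hF₁, Matrix.conjTranspose_smul, Matrix.smul_mul, Matrix.mul_smul,
      eq_neg_of_add_eq_zero_left hskew, star_neg, star_def, conj_I]
    module
  have hM : ∀ a b, HasDerivAt (fun ε => (1 - (A ε)ᴴ * A ε) a b) (((2 : ℂ) • F₁) a b) 0 := by
    intro a b
    rw [hmat, Matrix.neg_apply, ← zero_sub]
    exact (hasDerivAt_const _ _).sub (Matrix.hasDerivAt_conjTranspose_mul_apply hA hA a b)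
  have hnum := Matrix.hasDerivAt_dotProduct_mulVec hM (star v) v
  have hden : HasDerivAt (fun ε : ℝ => 1 - cexp ((-2 * ε : ℝ) : ℂ)) 2 0 := by
    simpa using (((hasDerivAt_id (0 : ℝ)).const_mul (-2)).exp.const_sub 1).ofReal_comp
  have h := tendsto_div_nhdsNE_of_hasDerivAt hnum hden (by simp [hA₀, G₀, hunit]) (by simp)
    two_ne_zero
  rw [Matrix.smul_mulVec, dotProduct_smul, smul_eq_mul, mul_div_cancel_left₀ _ two_ne_zero] at h
  exact h.mono_left (nhdsGT_le_nhdsNE 0)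
end
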